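/- Let Z be a p×d real matrix, W_Q, W_K, W_V, W₁, W₂ be d×d real matrices, d > 0, a : ℝ → ℝ an elementwise activation, and define the Transformer encoder block Enc(Z) = a(Softmax((Z W_Qᵀ)(Z W_Kᵀ)ᵀ/√d)(Z W_Vᵀ) W₁ᵀ) W₂ᵀ with row-wise softmax. Given a p×p permutation matrix P_R and a d×d permutation matrix P_C, define the encrypted block Enc_(P) obtained by replacing each weight Wᵢ (i ∈ {Q, K, V, 1, 2}) with W_{i(P)} = P_C Wᵢ P_Cᵀ. Then Enc_(P)(P_R Z P_Cᵀ) = P_R Enc(Z) P_Cᵀ: the Transformer encoder block is forward permutation equivalent under row-column shuffling. -/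
import Mathlib


open Matrix

/-- Row-wise softmax of a real matrix. -/
noncomputable def softmax {p q : ℕ} (A : Matrix (Fin p) (Fin q) ℝ) :
    Matrix (Fin p) (Fin q) ℝ :=
  Matrix.of fun i j => Real.exp (A i j) / ∑ k, Real.exp (A i k)

/-- Transformer encoder block
`Enc(Z) = a(Softmax((Z W_Qᵀ)(Z W_Kᵀ)ᵀ/√d)(Z W_Vᵀ) W₁ᵀ) W₂ᵀ`. -/
noncomputable def enc {p d : ℕ} (a : ℝ → ℝ)
    (WQ WK WV W₁ W₂ : Matrix (Fin d) (Fin d) ℝ)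
    (Z : Matrix (Fin p) (Fin d) ℝ) : Matrix (Fin p) (Fin d) ℝ :=
  ((softmax ((Real.sqrt d)⁻¹ • ((Z * WQᵀ) * (Z * WKᵀ)ᵀ)) * (Z * WVᵀ)) * W₁ᵀ).map a
    * W₂ᵀ

lemma permMatrix_transpose {n : ℕ} (σ : Equiv.Perm (Fin n)) :
    (σ.permMatrix ℝ)ᵀ = (σ⁻¹).permMatrix ℝ := by
  rw [Equiv.Perm.permMatrix, Equiv.Perm.permMatrix, ← PEquiv.toMatrix_symm,
    ← Equiv.toPEquiv_symm]
  rfl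

lemma permMatrix_mul {m n : ℕ} (σ : Equiv.Perm (Fin m)) (M : Matrix (Fin m) (Fin n) ℝ) :
    σ.permMatrix ℝ * M = M.submatrix σ id :=
  PEquiv.toMatrix_toPEquiv_mul σ M

lemma mul_permMatrix_transpose {m n : ℕ} (σ : Equiv.Perm (Fin n))
    (M : Matrix (Fin m) (Fin n) ℝ) :
    M * (σ.permMatrix ℝ)ᵀ = M.submatrix id σ := by
  rw [permMatrix_transpose, Equiv.Perm.permMatrix, PEquiv.mul_toMatrix_toPEquiv]
  rfl

lemma softmax_submatrix {p q p' : ℕ} (A : Matrix (Fin p) (Fin q) ℝ)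
    (e₁ : Fin p' → Fin p) (e₂ : Equiv.Perm (Fin q)) :
    softmax (A.submatrix e₁ ⇑e₂) = (softmax A).submatrix e₁ ⇑e₂ := by
  ext i j
  simp only [softmax, submatrix_apply, of_apply]
  congr 1
  exact Fintype.sum_equiv e₂ _ _ fun k => rfl

/-- Forward permutation equivalence under row-column shuffling: the encrypted
block (each weight `W` replaced by `P_C W P_Cᵀ`) applied to `P_R Z P_Cᵀ` equals
`P_R Enc(Z) P_Cᵀ`. -/
theorem enc_forward_perm_equivalent {p d : ℕ} (hd : 0 < d) (a : ℝ → ℝ)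
    (WQ WK WV W₁ W₂ : Matrix (Fin d) (Fin d) ℝ)
    (σR : Equiv.Perm (Fin p)) (σC : Equiv.Perm (Fin d))
    (Z : Matrix (Fin p) (Fin d) ℝ) :
    enc a (σC.permMatrix ℝ * WQ * (σC.permMatrix ℝ)ᵀ)
        (σC.permMatrix ℝ * WK * (σC.permMatrix ℝ)ᵀ)
        (σC.permMatrix ℝ * WV * (σC.permMatrix ℝ)ᵀ)
        (σC.permMatrix ℝ * W₁ * (σC.permMatrix ℝ)ᵀ)
        (σC.permMatrix ℝ * W₂ * (σC.permMatrix ℝ)ᵀ)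
        (σR.permMatrix ℝ * Z * (σC.permMatrix ℝ)ᵀ) =
      σR.permMatrix ℝ * enc a WQ WK WV W₁ W₂ Z * (σC.permMatrix ℝ)ᵀ := by
  have hsub : ∀ (W : Matrix (Fin d) (Fin d) ℝ),
      σC.permMatrix ℝ * W * (σC.permMatrix ℝ)ᵀ = W.submatrix σC σC := by
    intro W
    rw [mul_permMatrix_transpose, permMatrix_mul, submatrix_submatrix]
    rfl
  have hZ : σR.permMatrix ℝ * Z * (σC.permMatrix ℝ)ᵀ = Z.submatrix σR σC := by
    rw [mul_permMatrix_transpose, permMatrix_mul, submatrix_submatrix]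
    rfl
  rw [hsub, hsub, hsub, hsub, hsub, hZ, mul_permMatrix_transpose, permMatrix_mul]
  unfold enc
  simp only [transpose_submatrix, submatrix_mul_equiv, submatrix_map]
  have hsmul : (Real.sqrt d)⁻¹ • (Z * WQᵀ * (Z * WKᵀ)ᵀ).submatrix ⇑σR ⇑σR
      = ((Real.sqrt d)⁻¹ • (Z * WQᵀ * (Z * WKᵀ)ᵀ)).submatrix ⇑σR ⇑σR := rfl
  rw [hsmul, softmax_submatrix]
  simp only [submatrix_mul_equiv, submatrix_map]
  rw [← submatrix_map, submatrix_mul_equiv, submatrix_submatrix]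
  rfl
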